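/- arXiv:1605.06789 — 4 statements merged into one kernel-verified Lean document; each statement's English description precedes it below -/
import Mathlib

section
/- Let k be a field, A an abelian group, K a subgroup of A such that every element of A has a positive integer multiple lying in K (i.e. A/K is torsion). Let R be a commutative A-graded k-algebra that is finitely generated as a k-algebra, and let R_K = ⊕_{a∈K} R_a be the Veronese subalgebra of R consisting of the homogeneous pieces with degree in K. Then R is a finitely generated R_K-module, and R_K is a finitely generated k-algebra. -/
/-!
A finite generating set of `R` may be taken homogeneous. Since `A/K` is torsion, every
homogeneous generator `x ∈ R_a` has a power `x ^ m ∈ R_{m • a} ⊆ R_K`, so it is integral over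
`R_K`; hence `R` is an integral `R_K`-algebra of finite type, that is, a finite `R_K`-module.
The Artin–Tate lemma for `k ⊆ R_K ⊆ R` then shows that `R_K` is of finite type over `k`.
-/

namespace GradedAlgebra

theorem exists_finset_adjoin_eq_top_and_homogeneous_of_finiteType {R A ι : Type*}
    [CommSemiring R] [Semiring A] [Algebra R A] [DecidableEq ι] [AddMonoid ι]
    (𝒜 : ι → Submodule R A) [GradedAlgebra 𝒜] [Algebra.FiniteType R A] :
    ∃ s : Finset A, Algebra.adjoin R (s : Set A) = ⊤ ∧
      ∀ x ∈ s, SetLike.IsHomogeneousElem 𝒜 x := by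
  classical
  obtain ⟨F, hF⟩ := Algebra.FiniteType.out (R := R) (A := A)
  refine ⟨F.biUnion fun f ↦ (DirectSum.decompose 𝒜 f).support.image
      fun i ↦ (DirectSum.decompose 𝒜 f i : A), ?_, ?_⟩
  · rw [← top_le_iff, ← hF, Algebra.adjoin_le_iff]
    intro f hf
    rw [← DirectSum.sum_support_decompose 𝒜 f]
    exact sum_mem fun i hi ↦ Algebra.subset_adjoin (by simpa using ⟨f, hf, i, by simpa using hi, rfl⟩)
  · simp only [Finset.mem_biUnion, Finset.mem_image]
    rintro _ ⟨f, -, i, -, rfl⟩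
    exact ⟨i, (DirectSum.decompose 𝒜 f i).2⟩

end GradedAlgebra

theorem Algebra.IsIntegral.of_adjoin_eq_top_of_pow_mem {k R : Type*} [CommRing k] [CommRing R]
    [Algebra k R] (S : Subalgebra k R) {s : Set R} (hs : Algebra.adjoin k s = ⊤)
    (hpow : ∀ x ∈ s, ∃ n, 0 < n ∧ x ^ n ∈ S) : Algebra.IsIntegral S R := by
  have hint : ∀ x ∈ s, IsIntegral S x := fun x hx ↦
    have ⟨n, hn, hxn⟩ := hpow x hx
    .of_pow hn (isIntegral_algebraMap (x := (⟨x ^ n, hxn⟩ : S)))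
  refine ⟨fun x ↦ ?_⟩
  have hx : x ∈ Algebra.adjoin k s := hs ▸ Algebra.mem_top
  exact Algebra.adjoin_le (S := (integralClosure S R).restrictScalars k) hint hx

/-- Let `k` be a field, `A` an abelian group, `K ≤ A` with `A/K` torsion
(every element of `A` has a positive multiple in `K`), and `R` a commutative `A`-graded
`k`-algebra, finitely generated as a `k`-algebra.  Let `R_K` be the Veronese subalgebra
`⊕_{a ∈ K} R_a` (equivalently, the subalgebra generated by the homogeneous pieces of
degree in `K`).  Then `R` is a finitely generated `R_K`-module and `R_K` is a finitely
generated `k`-algebra. -/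
theorem stmt0 {k : Type*} [Field k] {A : Type*} [AddCommGroup A] [DecidableEq A]
    {R : Type*} [CommRing R] [Algebra k R]
    (𝒜 : A → Submodule k R) [GradedAlgebra 𝒜]
    (K : AddSubgroup A)
    (htor : ∀ a : A, ∃ m : ℕ, 0 < m ∧ m • a ∈ K)
    (hfg : Algebra.FiniteType k R)
    (RK : Subalgebra k R)
    (hRK : RK = Algebra.adjoin k (⋃ a ∈ (K : Set A), ((𝒜 a : Submodule k R) : Set R))) :
    Module.Finite RK R ∧ Algebra.FiniteType k RK := by
  obtain ⟨s, hs, hhom⟩ :=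
    GradedAlgebra.exists_finset_adjoin_eq_top_and_homogeneous_of_finiteType 𝒜
  have hpow : ∀ x ∈ (s : Set R), ∃ n, 0 < n ∧ x ^ n ∈ RK := by
    intro x hx
    obtain ⟨a, ha⟩ := hhom x hx
    obtain ⟨n, hn, hnK⟩ := htor a
    rw [hRK]
    exact ⟨n, hn, Algebra.subset_adjoin
      (Set.mem_iUnion₂.mpr ⟨n • a, hnK, SetLike.pow_mem_graded n ha⟩)⟩
  have := Algebra.IsIntegral.of_adjoin_eq_top_of_pow_mem RK hs hpow
  have := Algebra.FiniteType.of_restrictScalars_finiteType k RK R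
  have hfin : Module.Finite RK R := Algebra.IsIntegral.finite
  exact ⟨hfin, ⟨fg_of_fg_of_fg k RK R hfg.out hfin.fg_top Subtype.val_injective⟩⟩
end

section
/- Let k be a field, A an abelian group, K a subgroup of A, and R a commutative A-graded k-algebra generated as a k-algebra by homogeneous elements r_1, …, r_l. Suppose for each i there is a positive integer b_i such that b_i · deg(r_i) ∈ K. Then R is generated as a module over R_K = ⊕_{a∈K} R_a by the finitely many monomials r_1^{j_1} ⋯ r_l^{j_l} with 0 ≤ j_i < b_i for all i. -/
/-!
Writing `j i = b i * (j i / b i) + j i % b i` splits every monomial `∏ i, r i ^ j i` as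
`(∏ i, (r i ^ b i) ^ (j i / b i)) * ∏ i, r i ^ (j i % b i)`. The first factor is homogeneous of
degree in `K`, hence lies in `R_K`, and the second is one of the reduced monomials. Since the
monomials span `R` over `k ⊆ R_K`, the reduced ones span `R` over `R_K`.
-/

open Submodule

section ReducedMonomials

variable {k R ι : Type*} [CommSemiring k] [CommSemiring R] [Algebra k R] [Fintype ι]
  (B : Subalgebra k R) (r : ι → R) (b : ι → ℕ)

theorem prod_pow_mem_span_prod_pow_lt (hb : ∀ i, 0 < b i) (hrb : ∀ i, r i ^ b i ∈ B)
    (j : ι → ℕ) :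
    ∏ i, r i ^ j i ∈ span B {x : R | ∃ j : ι → ℕ, (∀ i, j i < b i) ∧ x = ∏ i, r i ^ j i} := by
  have hquot : ∏ i, (r i ^ b i) ^ (j i / b i) ∈ B :=
    prod_mem fun i _ => pow_mem (hrb i) _
  have hsplit : ∏ i, r i ^ j i = (∏ i, (r i ^ b i) ^ (j i / b i)) * ∏ i, r i ^ (j i % b i) := by
    rw [← Finset.prod_mul_distrib]
    refine Finset.prod_congr rfl fun i _ => ?_
    rw [← pow_mul, ← pow_add, Nat.div_add_mod]
  rw [hsplit]
  exact smul_mem _ (⟨_, hquot⟩ : B)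
    (subset_span ⟨fun i => j i % b i, fun i => Nat.mod_lt _ (hb i), rfl⟩)

theorem span_prod_pow_lt_eq_top (hgen : Algebra.adjoin k (Set.range r) = ⊤)
    (hb : ∀ i, 0 < b i) (hrb : ∀ i, r i ^ b i ∈ B) :
    span B {x : R | ∃ j : ι → ℕ, (∀ i, j i < b i) ∧ x = ∏ i, r i ^ j i} = ⊤ := by
  have hmonomials : span k (Submonoid.closure (Set.range r) : Set R) = ⊤ := by
    rw [← Algebra.adjoin_eq_span, hgen, Algebra.top_toSubmodule]
  rw [← restrictScalars_eq_top_iff k, eq_top_iff, ← hmonomials, span_le]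
  intro x hx
  obtain ⟨j, rfl⟩ := Submonoid.exists_of_mem_closure_range r x hx
  exact prod_pow_mem_span_prod_pow_lt B r b hb hrb j

end ReducedMonomials

/-- Let `k` be a field, `A` an abelian group, `K ≤ A` a subgroup, and `R` a
commutative `A`-graded `k`-algebra generated as a `k`-algebra by homogeneous elements
`r 1, …, r l` of degrees `deg 1, …, deg l`.  If for each `i` there is `b i > 0` with
`b i • deg i ∈ K`, then `R` is generated as a module over the Veronese subalgebra
`R_K = ⊕_{a ∈ K} R_a` by the monomials `∏ i, r i ^ j i` with `j i < b i` for all `i`. -/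
theorem stmt1 {k : Type*} [Field k] {A : Type*} [AddCommGroup A] [DecidableEq A]
    {R : Type*} [CommRing R] [Algebra k R]
    (𝒜 : A → Submodule k R) [GradedAlgebra 𝒜]
    (K : AddSubgroup A)
    {l : ℕ} (r : Fin l → R) (deg : Fin l → A)
    (hhom : ∀ i, r i ∈ 𝒜 (deg i))
    (hgen : Algebra.adjoin k (Set.range r) = ⊤)
    (b : Fin l → ℕ) (hb : ∀ i, 0 < b i) (hbK : ∀ i, (b i) • (deg i) ∈ K)
    (RK : Subalgebra k R)
    (hRK : RK = Algebra.adjoin k (⋃ a ∈ (K : Set A), ((𝒜 a : Submodule k R) : Set R))) :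
    Submodule.span RK
        {x : R | ∃ j : Fin l → ℕ, (∀ i, j i < b i) ∧ x = ∏ i, r i ^ j i} = ⊤ := by
  refine span_prod_pow_lt_eq_top RK r b hgen hb fun i => ?_
  rw [hRK]
  exact Algebra.subset_adjoin (Set.mem_biUnion (hbK i) (SetLike.pow_mem_graded _ (hhom i)))
end

section
/- Let R be an integral domain graded by an abelian group A which is A-factorial, let s ∈ R be a homogeneous element of degree d that is nonzero and non-invertible, and let n ≥ 2 be an integer. Set A' = (A ⊕ ℤ)/⟨(d, −n)⟩ and R' = R[z]/(z^n − s), graded by A' so that elements of R keep (the image of) their A-degrees and z is homogeneous of degree the class of (0,1). Then R' is A'-factorial if and only if s is A-irreducible. -/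
/-- A nonzero, non-invertible homogeneous element is `A`-irreducible (h-irreducible) if
whenever it is written as a product of two homogeneous elements, one of them is a unit. -/
def HIrreducible {A R : Type*} [CommRing R] (𝒜 : A → AddSubgroup R) (a : R) : Prop :=
  a ≠ 0 ∧ ¬IsUnit a ∧ SetLike.IsHomogeneousElem 𝒜 a ∧
    ∀ b c : R, SetLike.IsHomogeneousElem 𝒜 b → SetLike.IsHomogeneousElem 𝒜 c →
      a = b * c → IsUnit b ∨ IsUnit c

/-- Two elements are associated up to an invertible homogeneous element. -/
def HAssociated {A R : Type*} [CommRing R] (𝒜 : A → AddSubgroup R) (a b : R) : Prop :=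
  ∃ u : R, IsUnit u ∧ SetLike.IsHomogeneousElem 𝒜 u ∧ b = u * a

/-- `R` is graded factorial (`A`-factorial): every nonzero non-invertible homogeneous
element has a factorisation into h-irreducible elements, and any two such factorisations
agree up to reordering and multiplication with invertible homogeneous elements. -/
def GradedFactorial {A R : Type*} [CommRing R] (𝒜 : A → AddSubgroup R) : Prop :=
  (∀ a : R, a ≠ 0 → ¬IsUnit a → SetLike.IsHomogeneousElem 𝒜 a →
      ∃ f : Multiset R, (∀ b ∈ f, HIrreducible 𝒜 b) ∧ f.prod = a) ∧
  ∀ f g : Multiset R, (∀ b ∈ f, HIrreducible 𝒜 b) → (∀ b ∈ g, HIrreducible 𝒜 b) →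
      f.prod = g.prod → Multiset.Rel (HAssociated 𝒜) f g

/-- The grading of `R' = R[z]/(z^n - s)` by `A' = (A ⊕ ℤ)/⟨(d, -n)⟩`: the homogeneous
piece of degree `[(a, i)]` with `0 ≤ i < n` is `R_a · z^i`, where `z` is the root. -/
noncomputable def rootGrading {A R : Type*} [AddCommGroup A] [CommRing R]
    (𝒜 : A → AddSubgroup R) (d : A) (s : R) (n : ℕ)
    (c : (A × ℤ) ⧸ AddSubgroup.zmultiples (d, -(n : ℤ))) :
    AddSubgroup (AdjoinRoot (Polynomial.X ^ n - Polynomial.C s)) :=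
  AddSubgroup.closure {x | ∃ (a : A) (i : ℕ), i < n ∧
    (QuotientAddGroup.mk (a, (i : ℤ)) :
        (A × ℤ) ⧸ AddSubgroup.zmultiples (d, -(n : ℤ))) = c ∧
    ∃ r ∈ 𝒜 a, x = AdjoinRoot.of (Polynomial.X ^ n - Polynomial.C s) r *
      AdjoinRoot.root (Polynomial.X ^ n - Polynomial.C s) ^ i}

/-!
The homogeneous elements of `R' = R[z]/(z^n - s)` are exactly the `r z^i` with `r ∈ R`
homogeneous and `i < n`, and the nonzero ones are non-zero-divisors because `R'` is free over `R`
with basis `1, z, …, z^(n-1)`. Hence factorisation theory in `R'` behaves as in a domain: `R'`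
is graded factorial as soon as every nonzero homogeneous non-unit is a product of h-primes.

If `s` is h-irreducible, it is h-prime in the graded factorial ring `R`. Then `z` is h-prime in
`R'`, because `z` divides `r ∈ R` exactly when `s` does, and every h-prime `q` of `R` not
dividing `s` stays h-prime in `R'`; an h-irreducible `q` dividing `s` is a unit multiple of
`s = z^n`. Conversely, if `R'` is graded factorial, then `z`, which is h-irreducible since
`n ≥ 2`, is h-prime, so `s = bc` gives `z ∣ b` or `z ∣ c`, that is `s ∣ b` or `s ∣ c`, and the
other factor is a unit.
-/

open SetLike (IsHomogeneousElem)

theorem IsLeftRegular.isUnit_of_eq_mul_of_dvd {M : Type*} [CommMonoid M] {p b c : M}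
    (hp : IsLeftRegular p) (h : p = b * c) (hpb : p ∣ b) : IsUnit c := by
  obtain ⟨w, rfl⟩ := hpb
  exact IsUnit.of_mul_eq_one_right w <| hp <| show p * (w * c) = p * 1 by
    rw [mul_one, ← mul_assoc, ← h]

section HomogeneousDivisibility

variable {B T : Type*} [CommRing T] {𝒢 : B → AddSubgroup T}

def HDvd (𝒢 : B → AddSubgroup T) (p x : T) : Prop :=
  ∃ w, IsHomogeneousElem 𝒢 w ∧ x = p * w

structure HPrime (𝒢 : B → AddSubgroup T) (p : T) : Prop where
  ne_zero : p ≠ 0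
  not_isUnit : ¬IsUnit p
  isHomogeneousElem : IsHomogeneousElem 𝒢 p
  hDvd_or_hDvd {x y : T} : IsHomogeneousElem 𝒢 x → IsHomogeneousElem 𝒢 y →
    HDvd 𝒢 p (x * y) → HDvd 𝒢 p x ∨ HDvd 𝒢 p y

structure IsHomogeneousCancellative (𝒢 : B → AddSubgroup T) : Prop where
  isHomogeneousElem_of_mul_eq_one {u v : T} : IsHomogeneousElem 𝒢 u → u * v = 1 →
    IsHomogeneousElem 𝒢 v
  isLeftRegular {p : T} : IsHomogeneousElem 𝒢 p → p ≠ 0 → IsLeftRegular p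

namespace HIrreducible

variable {p : T} (hp : HIrreducible 𝒢 p)
include hp

theorem ne_zero : p ≠ 0 := hp.1

theorem not_isUnit : ¬IsUnit p := hp.2.1

theorem isHomogeneousElem : IsHomogeneousElem 𝒢 p := hp.2.2.1

theorem isUnit_or_isUnit {b c : T} (hb : IsHomogeneousElem 𝒢 b) (hc : IsHomogeneousElem 𝒢 c)
    (h : p = b * c) : IsUnit b ∨ IsUnit c :=
  hp.2.2.2 b c hb hc h

end HIrreducible

theorem HDvd.dvd {p x : T} (h : HDvd 𝒢 p x) : p ∣ x :=
  let ⟨w, _, hw⟩ := h; ⟨w, hw⟩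

theorem eq_zero_of_forall_hIrreducible_of_isUnit_prod {f : Multiset T}
    (hf : ∀ q ∈ f, HIrreducible 𝒢 q) (hu : IsUnit f.prod) : f = 0 := by
  classical
  by_contra hf0
  obtain ⟨q, hq⟩ := Multiset.exists_mem_of_ne_zero hf0
  rw [← Multiset.prod_erase hq] at hu
  exact (hf q hq).not_isUnit (isUnit_of_mul_isUnit_left hu)

theorem IsHomogeneousCancellative.exists_inv (hG : IsHomogeneousCancellative 𝒢) {u : T}
    (hu : IsUnit u) (huh : IsHomogeneousElem 𝒢 u) :
    ∃ v, u * v = 1 ∧ IsUnit v ∧ IsHomogeneousElem 𝒢 v := by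
  obtain ⟨v, huv⟩ := hu.exists_right_inv
  exact ⟨v, huv, IsUnit.of_mul_eq_one_right u huv, hG.isHomogeneousElem_of_mul_eq_one huh huv⟩

theorem hDvd_zero [Zero B] (p : T) : HDvd 𝒢 p 0 :=
  ⟨0, ⟨0, zero_mem _⟩, (mul_zero p).symm⟩

variable [AddMonoid B] [SetLike.GradedMonoid 𝒢]

theorem SetLike.IsHomogeneousElem.multiset_prod {f : Multiset T}
    (hf : ∀ x ∈ f, IsHomogeneousElem 𝒢 x) :
    IsHomogeneousElem 𝒢 f.prod :=
  (SetLike.homogeneousSubmonoid 𝒢).multiset_prod_mem f hf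

theorem SetLike.IsHomogeneousElem.pow {x : T} (hx : IsHomogeneousElem 𝒢 x) (k : ℕ) :
    IsHomogeneousElem 𝒢 (x ^ k) :=
  (SetLike.homogeneousSubmonoid 𝒢).pow_mem hx k

theorem HDvd.mul_right {p x y : T} (h : HDvd 𝒢 p x) (hy : IsHomogeneousElem 𝒢 y) :
    HDvd 𝒢 p (x * y) := by
  obtain ⟨w, hw, rfl⟩ := h
  exact ⟨w * y, hw.mul hy, mul_assoc p w y⟩

theorem HDvd.of_mem_multiset_prod {p q : T} {f : Multiset T} (h : HDvd 𝒢 p q) (hq : q ∈ f)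
    (hf : ∀ x ∈ f, IsHomogeneousElem 𝒢 x) : HDvd 𝒢 p f.prod := by
  classical
  rw [← Multiset.prod_erase hq]
  exact h.mul_right <|
    IsHomogeneousElem.multiset_prod fun x hx => hf x (Multiset.mem_of_mem_erase hx)

theorem HPrime.hDvd_of_hDvd_pow {p x : T} (hp : HPrime 𝒢 p) (hx : IsHomogeneousElem 𝒢 x) :
    ∀ {k : ℕ}, HDvd 𝒢 p (x ^ k) → HDvd 𝒢 p x
  | 0, ⟨w, _, hw⟩ => absurd (IsUnit.of_mul_eq_one w (by rw [← hw, pow_zero])) hp.not_isUnit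
  | k + 1, h => by
    rw [pow_succ] at h
    exact (hp.hDvd_or_hDvd (hx.pow k) hx h).elim (hp.hDvd_of_hDvd_pow hx) id

theorem HPrime.exists_mem_hDvd_of_hDvd_prod {p : T} (hp : HPrime 𝒢 p) {f : Multiset T}
    (hf : ∀ x ∈ f, IsHomogeneousElem 𝒢 x) (h : HDvd 𝒢 p f.prod) : ∃ q ∈ f, HDvd 𝒢 p q := by
  induction f using Multiset.induction_on with
  | empty =>
    obtain ⟨w, -, hw⟩ := h
    exact absurd (IsUnit.of_mul_eq_one w hw.symm) hp.not_isUnit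
  | cons a f ih =>
    rw [Multiset.prod_cons] at h
    have hf' : ∀ x ∈ f, IsHomogeneousElem 𝒢 x := fun x hx => hf x (Multiset.mem_cons_of_mem hx)
    rcases hp.hDvd_or_hDvd (hf a (Multiset.mem_cons_self a f))
      (IsHomogeneousElem.multiset_prod hf') h with ha | hf
    · exact ⟨a, Multiset.mem_cons_self a f, ha⟩
    · obtain ⟨q, hq, hpq⟩ := ih hf' hf
      exact ⟨q, Multiset.mem_cons_of_mem hq, hpq⟩

namespace IsHomogeneousCancellative

variable (hG : IsHomogeneousCancellative 𝒢)
include hG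

theorem hIrreducible_unit_mul {u p : T} (hu : IsUnit u) (huh : IsHomogeneousElem 𝒢 u)
    (hp : HIrreducible 𝒢 p) : HIrreducible 𝒢 (u * p) := by
  obtain ⟨v, huv, -, hvh⟩ := hG.exists_inv hu huh
  refine ⟨by rw [Ne, hu.mul_right_eq_zero]; exact hp.ne_zero,
    fun h => hp.not_isUnit (isUnit_of_mul_isUnit_right (x := u) h), huh.mul hp.isHomogeneousElem,
    fun b c hb hc h => ?_⟩
  have hpvb : p = v * b * c := by rw [mul_assoc, ← h, ← mul_assoc, mul_comm v, huv, one_mul]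
  exact (hp.isUnit_or_isUnit (hvh.mul hb) hc hpvb).imp_left fun hvb =>
    by simpa [← mul_assoc, huv] using hu.mul hvb

theorem hPrime_unit_mul {u p : T} (hu : IsUnit u) (huh : IsHomogeneousElem 𝒢 u)
    (hp : HPrime 𝒢 p) : HPrime 𝒢 (u * p) := by
  obtain ⟨v, huv, -, hvh⟩ := hG.exists_inv hu huh
  refine ⟨by rw [Ne, hu.mul_right_eq_zero]; exact hp.ne_zero,
    fun h => hp.not_isUnit (isUnit_of_mul_isUnit_right (x := u) h), huh.mul hp.isHomogeneousElem,
    fun hx hy ⟨w, hw, hxy⟩ => ?_⟩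
  have hunit : ∀ {x}, HDvd 𝒢 p x → HDvd 𝒢 (u * p) x := fun ⟨t, ht, hxt⟩ =>
    ⟨v * t, hvh.mul ht, by rw [hxt]; linear_combination (-(p * t)) * huv⟩
  exact (hp.hDvd_or_hDvd hx hy ⟨u * w, huh.mul hw, by rw [hxy]; ring⟩).imp hunit hunit

theorem hIrreducible_of_hPrime {p : T} (hp : HPrime 𝒢 p) : HIrreducible 𝒢 p := by
  refine ⟨hp.ne_zero, hp.not_isUnit, hp.isHomogeneousElem, fun b c hb hc hpbc => ?_⟩
  have hreg := hG.isLeftRegular hp.isHomogeneousElem hp.ne_zero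
  have hpbc' : HDvd 𝒢 p (b * c) := ⟨1, SetLike.isHomogeneousElem_one 𝒢, by rw [mul_one, hpbc]⟩
  refine (hp.hDvd_or_hDvd hb hc hpbc').symm.imp
    (fun h => hreg.isUnit_of_eq_mul_of_dvd (hpbc.trans (mul_comm b c)) h.dvd)
    (fun h => hreg.isUnit_of_eq_mul_of_dvd hpbc h.dvd)

theorem rel_hAssociated_of_prod_eq_unit_mul (hprime : ∀ p, HIrreducible 𝒢 p → HPrime 𝒢 p)
    {f g : Multiset T} (hf : ∀ x ∈ f, HIrreducible 𝒢 x) (hg : ∀ x ∈ g, HIrreducible 𝒢 x)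
    {u : T} (hu : IsUnit u) (huh : IsHomogeneousElem 𝒢 u) (h : f.prod = u * g.prod) :
    Multiset.Rel (HAssociated 𝒢) f g := by
  classical
  induction f using Multiset.induction_on generalizing g u with
  | empty =>
    rw [Multiset.prod_zero] at h
    rw [eq_zero_of_forall_hIrreducible_of_isUnit_prod hg
      (isUnit_of_mul_isUnit_right (h ▸ isUnit_one))]
    exact Multiset.Rel.zero
  | cons p f ih =>
    rw [Multiset.prod_cons] at h
    have hp := hf p (Multiset.mem_cons_self p f)
    have hf' := fun x hx => hf x (Multiset.mem_cons_of_mem hx)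
    obtain ⟨v, huv, -, hvh⟩ := hG.exists_inv hu huh
    have hpg : HDvd 𝒢 p g.prod := ⟨v * f.prod,
      hvh.mul (IsHomogeneousElem.multiset_prod fun x hx => (hf' x hx).isHomogeneousElem),
      by linear_combination (-v) * h - g.prod * huv⟩
    obtain ⟨q, hq, w, hw, hqw⟩ := (hprime p hp).exists_mem_hDvd_of_hDvd_prod
      (fun x hx => (hg x hx).isHomogeneousElem) hpg
    have hwu : IsUnit w := ((hg q hq).isUnit_or_isUnit hp.isHomogeneousElem hw hqw).resolve_left
      hp.not_isUnit
    have hrest : f.prod = u * w * (g.erase q).prod :=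
      hG.isLeftRegular hp.isHomogeneousElem hp.ne_zero <|
        show p * f.prod = p * (u * w * (g.erase q).prod) by
          rw [h, ← Multiset.prod_erase hq, hqw]; ring
    rw [← Multiset.cons_erase hq]
    exact .cons ⟨w, hwu, hw, by rw [hqw, mul_comm]⟩
      (ih hf' (fun x hx => hg x (Multiset.mem_of_mem_erase hx)) (hu.mul hwu) (huh.mul hw) hrest)

theorem hPrime_of_hIrreducible_of_mem_closure {p : T} (hp : HIrreducible 𝒢 p)
    (hcl : p ∈ Submonoid.closure {q | HPrime 𝒢 q}) : HPrime 𝒢 p := by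
  classical
  obtain ⟨l, hl, rfl⟩ := Submonoid.exists_multiset_of_mem_closure hcl
  rcases Multiset.empty_or_exists_mem l with rfl | ⟨q, hq⟩
  · exact (hp.not_isUnit (by simp)).elim
  have hq' : HPrime 𝒢 q := hl q hq
  rw [← Multiset.prod_erase hq] at hp ⊢
  have hrest : IsHomogeneousElem 𝒢 (l.erase q).prod := IsHomogeneousElem.multiset_prod
    fun x hx => (hl x (Multiset.mem_of_mem_erase hx)).isHomogeneousElem
  rcases hp.isUnit_or_isUnit hq'.isHomogeneousElem hrest rfl with h | h
  · exact absurd h hq'.not_isUnit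
  · rw [mul_comm]
    exact hG.hPrime_unit_mul h hrest hq'

theorem gradedFactorial_of_forall_mem_closure
    (h : ∀ x, x ≠ 0 → ¬IsUnit x → IsHomogeneousElem 𝒢 x →
      x ∈ Submonoid.closure {p | HPrime 𝒢 p}) :
    GradedFactorial 𝒢 := by
  refine ⟨fun x hx0 hxu hx => ?_, fun f g hf hg hfg => ?_⟩
  · obtain ⟨l, hl, rfl⟩ := Submonoid.exists_multiset_of_mem_closure (h x hx0 hxu hx)
    exact ⟨l, fun q hq => hG.hIrreducible_of_hPrime (hl q hq), rfl⟩
  · refine hG.rel_hAssociated_of_prod_eq_unit_mul (fun p hp => ?_) hf hg isUnit_one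
      (SetLike.isHomogeneousElem_one 𝒢) (by rw [hfg, one_mul])
    exact hG.hPrime_of_hIrreducible_of_mem_closure hp
      (h p hp.ne_zero hp.not_isUnit hp.isHomogeneousElem)

end IsHomogeneousCancellative

theorem GradedFactorial.exists_eq_unit_mul_prod (hfac : GradedFactorial 𝒢) {x : T} (hx0 : x ≠ 0)
    (hx : IsHomogeneousElem 𝒢 x) :
    ∃ (u : T) (f : Multiset T), IsUnit u ∧ IsHomogeneousElem 𝒢 u ∧
      (∀ q ∈ f, HIrreducible 𝒢 q) ∧ x = u * f.prod := by
  by_cases hxu : IsUnit x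
  · exact ⟨x, 0, hxu, hx, by simp, by simp⟩
  · obtain ⟨f, hf, rfl⟩ := hfac.1 x hx0 hxu hx
    exact ⟨1, f, isUnit_one, SetLike.isHomogeneousElem_one 𝒢, hf, (one_mul _).symm⟩

theorem GradedFactorial.hPrime_of_hIrreducible (hfac : GradedFactorial 𝒢)
    (hG : IsHomogeneousCancellative 𝒢) {p : T} (hp : HIrreducible 𝒢 p) : HPrime 𝒢 p := by
  refine ⟨hp.ne_zero, hp.not_isUnit, hp.isHomogeneousElem, fun {x y} hx hy ⟨t, ht, hxy⟩ => ?_⟩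
  by_cases hx0 : x = 0
  · exact .inl (hx0 ▸ hDvd_zero p)
  by_cases hy0 : y = 0
  · exact .inr (hy0 ▸ hDvd_zero p)
  have ht0 : t ≠ 0 := by
    rintro rfl
    exact hy0 (hG.isLeftRegular hx hx0 (show x * y = x * 0 by rw [hxy, mul_zero, mul_zero]))
  obtain ⟨u, f, hu, huh, hf, rfl⟩ := hfac.exists_eq_unit_mul_prod hx0 hx
  obtain ⟨v, g, hv, hvh, hg, rfl⟩ := hfac.exists_eq_unit_mul_prod hy0 hy
  obtain ⟨w, k, hw, hwh, hk, rfl⟩ := hfac.exists_eq_unit_mul_prod ht0 ht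
  obtain ⟨u', huu', hu', hu'h⟩ := hG.exists_inv hu huh
  obtain ⟨v', hvv', hv', hv'h⟩ := hG.exists_inv hv hvh
  have hc : IsUnit (u' * v' * w) := (hu'.mul hv').mul hw
  have hch : IsHomogeneousElem 𝒢 (u' * v' * w) := (hu'h.mul hv'h).mul hwh
  -- Comparing two factorisations of `x * y = p * t`, `p` is associated to a factor of `x` or `y`.
  have hprod : (f + g).prod = ((u' * v' * w * p) ::ₘ k).prod := by
    rw [Multiset.prod_add, Multiset.prod_cons]
    linear_combination (u' * v') * hxy - f.prod * g.prod * huu' - f.prod * g.prod * u * u' * hvv'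
  have hrel := hfac.2 _ _ (fun q hq => (Multiset.mem_add.1 hq).elim (hf q) (hg q))
    (fun q hq => (Multiset.mem_cons.1 hq).elim (fun h => h ▸ hG.hIrreducible_unit_mul hc hch hp)
      (hk q)) hprod
  obtain ⟨q, _, ⟨e, he, heh, hqe⟩, -, hfg⟩ := Multiset.rel_cons_right.1 hrel
  obtain ⟨e', hee', -, he'h⟩ := hG.exists_inv he heh
  have hpq : HDvd 𝒢 p q :=
    ⟨e' * (u' * v' * w), he'h.mul hch, by linear_combination (-e') * hqe - q * hee'⟩
  have hirr_hom : ∀ {l : Multiset T}, (∀ q ∈ l, HIrreducible 𝒢 q) →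
      ∀ x ∈ l, IsHomogeneousElem 𝒢 x := fun hl x hx => (hl x hx).isHomogeneousElem
  rcases Multiset.mem_add.1 (hfg ▸ Multiset.mem_cons_self q _) with hqf | hqg
  · left
    rw [mul_comm]
    exact (hpq.of_mem_multiset_prod hqf (hirr_hom hf)).mul_right huh
  · right
    rw [mul_comm]
    exact (hpq.of_mem_multiset_prod hqg (hirr_hom hg)).mul_right hvh

end HomogeneousDivisibility

open Polynomial

section RootAdjunction

variable {R : Type*} [CommRing R] (s : R) (n : ℕ)

local notation "ι" => AdjoinRoot.of (X ^ n - C s)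
local notation "𝔷" => AdjoinRoot.root (X ^ n - C s)

theorem root_pow_self : 𝔷 ^ n = ι s := by
  have h := AdjoinRoot.mk_self (f := X ^ n - C s)
  rwa [map_sub, map_pow, AdjoinRoot.mk_X, AdjoinRoot.mk_C, sub_eq_zero] at h

theorem root_mul_root_pow_pred [NeZero n] : 𝔷 * 𝔷 ^ (n - 1) = ι s := by
  rw [← pow_succ', Nat.sub_one_add_one (NeZero.ne n), root_pow_self]

theorem root_pow_eq (m : ℕ) : 𝔷 ^ m = ι (s ^ (m / n)) * 𝔷 ^ (m % n) := by
  rw [map_pow, ← root_pow_self, ← pow_mul, ← pow_add, Nat.div_add_mod]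

theorem of_mul_root_pow_mul_of_mul_root_pow (a b : R) (i j : ℕ) :
    ι a * 𝔷 ^ i * (ι b * 𝔷 ^ j) = ι (a * b * s ^ ((i + j) / n)) * 𝔷 ^ ((i + j) % n) := by
  rw [map_mul, map_mul, mul_assoc (ι a * ι b), ← root_pow_eq, pow_add]
  ring

variable [NeZero n]

section Nontrivial

variable [Nontrivial R]

noncomputable def rootBasis : Module.Basis (Fin n) R (AdjoinRoot (X ^ n - C s)) :=
  (AdjoinRoot.powerBasis' (monic_X_pow_sub_C s (NeZero.ne n))).basis.reindex
    (finCongr (natDegree_X_pow_sub_C (n := n) (r := s)))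

theorem of_mul_root_pow_eq_smul_rootBasis (r : R) {i : ℕ} (hi : i < n) :
    ι r * 𝔷 ^ i = r • rootBasis s n ⟨i, hi⟩ := by
  rw [rootBasis, Module.Basis.reindex_apply, PowerBasis.basis_eq_pow, AdjoinRoot.powerBasis'_gen,
    Algebra.smul_def, AdjoinRoot.algebraMap_eq]
  rfl

theorem of_mul_root_pow_eq_of_mul_root_pow_iff {r r' : R} {i j : ℕ} (hi : i < n) (hj : j < n) :
    ι r * 𝔷 ^ i = ι r' * 𝔷 ^ j ↔ (r = 0 ∧ r' = 0) ∨ (i = j ∧ r = r') := by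
  rw [of_mul_root_pow_eq_smul_rootBasis s n r hi, of_mul_root_pow_eq_smul_rootBasis s n r' hj,
    ← (rootBasis s n).repr.injective.eq_iff]
  simp only [map_smul, Module.Basis.repr_self, Finsupp.smul_single, smul_eq_mul, mul_one,
    Finsupp.single_eq_single_iff, Fin.mk.injEq]
  tauto

theorem of_injective : Function.Injective (ι) := fun r r' h => by
  have := (of_mul_root_pow_eq_of_mul_root_pow_iff s n (NeZero.pos n) (NeZero.pos n)).1
    (by simpa using h)
  exact this.elim (fun h => h.1.trans h.2.symm) And.right

theorem isUnit_of_isUnit_of {r : R} (h : IsUnit (ι r)) : IsUnit r := by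
  have hnorm := h.map (Algebra.norm R)
  rw [← AdjoinRoot.algebraMap_eq, Algebra.norm_algebraMap_of_basis (rootBasis s n),
    Fintype.card_fin, isUnit_pow_iff (NeZero.ne n)] at hnorm
  exact hnorm

theorem not_isUnit_root (hs : ¬IsUnit s) : ¬IsUnit 𝔷 :=
  fun h => hs (isUnit_of_isUnit_of s n (root_pow_self s n ▸ h.pow n))

theorem isUnit_of_mul_root_pow_iff (hs : ¬IsUnit s) {r : R} {i : ℕ} :
    IsUnit (ι r * 𝔷 ^ i) ↔ i = 0 ∧ IsUnit r := by
  refine ⟨fun h => ?_, fun ⟨hi, hr⟩ => by simpa [hi] using hr.map (ι)⟩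
  obtain rfl : i = 0 := by
    by_contra hi
    obtain ⟨k, rfl⟩ := Nat.exists_eq_add_one_of_ne_zero hi
    exact not_isUnit_root s n hs (isUnit_of_dvd_unit ⟨ι r * 𝔷 ^ k, by ring⟩ h)
  simpa using isUnit_of_isUnit_of s n (by simpa using h)

theorem root_ne_zero (hs0 : s ≠ 0) : 𝔷 ≠ 0 := fun h => hs0 <| of_injective s n <| by
  rw [← root_pow_self, h, zero_pow (NeZero.ne n), map_zero]

end Nontrivial

variable [IsDomain R]

theorem isLeftRegular_of {r : R} (hr : r ≠ 0) : IsLeftRegular (ι r) := by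
  have := (rootBasis s n).isTorsionFree
  intro x y h
  exact smul_right_injective _ hr (by simpa [Algebra.smul_def] using h)

theorem isLeftRegular_root (hs : s ≠ 0) : IsLeftRegular 𝔷 := by
  refine IsLeftRegular.of_mul (a := 𝔷 ^ (n - 1)) ?_
  rw [mul_comm, root_mul_root_pow_pred]
  exact isLeftRegular_of s n hs

theorem isLeftRegular_of_mul_root_pow (hs : s ≠ 0) {r : R} (hr : r ≠ 0) (i : ℕ) :
    IsLeftRegular (ι r * 𝔷 ^ i) :=
  (isLeftRegular_of s n hr).mul ((isLeftRegular_root s n hs).pow i)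

end RootAdjunction

section RootGrading

variable {A : Type*} [AddCommGroup A] {R : Type*} [CommRing R] (𝒜 : A → AddSubgroup R)
  (d : A) (s : R) (n : ℕ)

local notation "ι" => AdjoinRoot.of (X ^ n - C s)
local notation "𝔷" => AdjoinRoot.root (X ^ n - C s)
local notation "A'" => (A × ℤ) ⧸ AddSubgroup.zmultiples (d, -(n : ℤ))

namespace RootDegree

theorem eq_and_eq_of_mk_eq_mk {a b : A} {i j : ℕ} (hi : i < n) (hj : j < n)
    (h : (QuotientAddGroup.mk (a, (i : ℤ)) : A') = QuotientAddGroup.mk (b, (j : ℤ))) :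
    a = b ∧ i = j := by
  obtain ⟨k, hk⟩ := AddSubgroup.mem_zmultiples_iff.1 (QuotientAddGroup.eq.1 h)
  simp only [Prod.ext_iff, Prod.smul_fst, Prod.smul_snd, Prod.fst_add, Prod.snd_add, Prod.fst_neg,
    Prod.snd_neg, smul_eq_mul] at hk
  have hij : (j : ℤ) - i = 0 :=
    Int.eq_zero_of_abs_lt_dvd (m := n) ⟨-k, by linarith [hk.2]⟩ (by rw [abs_lt]; omega)
  have hk0 : k = 0 :=
    (mul_eq_zero.1 (by linarith [hk.2] : k * n = 0)).resolve_right (by omega)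
  subst hk0
  refine ⟨?_, by omega⟩
  simpa [neg_add_eq_zero] using hk.1.symm

theorem mk_add_zsmul (a : A) (m k : ℤ) :
    (QuotientAddGroup.mk (a + k • d, m) : A') = QuotientAddGroup.mk (a, m + k * n) := by
  refine QuotientAddGroup.eq.2 (AddSubgroup.mem_zmultiples_iff.2 ⟨-k, ?_⟩)
  ext <;> simp

theorem exists_mk_eq [NeZero n] (c : A') :
    ∃ (a : A) (i : ℕ), i < n ∧ (QuotientAddGroup.mk (a, (i : ℤ)) : A') = c := by
  obtain ⟨⟨a, m⟩, rfl⟩ := QuotientAddGroup.mk_surjective c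
  have hn : (0 : ℤ) < n := by have := NeZero.ne n; omega
  refine ⟨a + (m / n) • d, (m % n).toNat, by have := Int.emod_lt_of_pos m hn; omega, ?_⟩
  rw [Int.toNat_of_nonneg (Int.emod_nonneg m hn.ne'), mk_add_zsmul, mul_comm, Int.emod_add_mul_ediv]

theorem mk_eq_mk_mod (a : A) (m : ℕ) :
    (QuotientAddGroup.mk (a + (m / n) • d, ((m % n : ℕ) : ℤ)) : A') =
      QuotientAddGroup.mk (a, (m : ℤ)) := by
  rw [← natCast_zsmul, mk_add_zsmul]
  push_cast
  rw [mul_comm, Int.emod_add_mul_ediv]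

end RootDegree

theorem of_mul_root_pow_mem_rootGrading [SetLike.GradedMonoid 𝒜] [NeZero n] (hs : s ∈ 𝒜 d)
    {a : A} {r : R} (hr : r ∈ 𝒜 a) (m : ℕ) :
    ι r * 𝔷 ^ m ∈ rootGrading 𝒜 d s n (QuotientAddGroup.mk (a, (m : ℤ))) := by
  rw [root_pow_eq s n m, ← mul_assoc, ← map_mul, ← RootDegree.mk_eq_mk_mod]
  exact AddSubgroup.subset_closure ⟨_, _, Nat.mod_lt _ (NeZero.pos n), rfl, _,
    SetLike.mul_mem_graded hr (SetLike.pow_mem_graded _ hs), rfl⟩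

theorem exists_of_mem_rootGrading_mk {a : A} {i : ℕ} (hi : i < n) {x : AdjoinRoot (X ^ n - C s)}
    (hx : x ∈ rootGrading 𝒜 d s n (QuotientAddGroup.mk (a, (i : ℤ)))) :
    ∃ r ∈ 𝒜 a, x = ι r * 𝔷 ^ i := by
  let φ : R →+ AdjoinRoot (X ^ n - C s) :=
    (AddMonoidHom.mulRight (𝔷 ^ i)).comp (ι).toAddMonoidHom
  have hle : rootGrading 𝒜 d s n (QuotientAddGroup.mk (a, (i : ℤ))) ≤ (𝒜 a).map φ := by
    refine (AddSubgroup.closure_le _).2 ?_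
    rintro y ⟨b, j, hj, hc, r, hr, rfl⟩
    obtain ⟨rfl, rfl⟩ := RootDegree.eq_and_eq_of_mk_eq_mk d n hj hi hc
    exact ⟨r, hr, rfl⟩
  obtain ⟨r, hr, rfl⟩ := hle hx
  exact ⟨r, hr, rfl⟩

theorem exists_of_isHomogeneousElem_rootGrading [NeZero n] {x : AdjoinRoot (X ^ n - C s)}
    (hx : IsHomogeneousElem (rootGrading 𝒜 d s n) x) :
    ∃ (a : A) (r : R) (i : ℕ), i < n ∧ r ∈ 𝒜 a ∧ x = ι r * 𝔷 ^ i := by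
  obtain ⟨c, hc⟩ := hx
  obtain ⟨a, i, hi, rfl⟩ := RootDegree.exists_mk_eq d n c
  obtain ⟨r, hr, rfl⟩ := exists_of_mem_rootGrading_mk 𝒜 d s n hi hc
  exact ⟨a, r, i, hi, hr, rfl⟩

variable [SetLike.GradedMonoid 𝒜] [NeZero n] {d s}

theorem gradedMonoid_rootGrading (hs : s ∈ 𝒜 d) : SetLike.GradedMonoid (rootGrading 𝒜 d s n) where
  one_mem := by
    convert of_mul_root_pow_mem_rootGrading 𝒜 d s n hs (SetLike.one_mem_graded 𝒜) 0 using 2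
    · rfl
    · simp
  mul_mem := by
    intro c c' x y hx hy
    obtain ⟨a, i, hi, rfl⟩ := RootDegree.exists_mk_eq d n c
    obtain ⟨b, j, hj, rfl⟩ := RootDegree.exists_mk_eq d n c'
    obtain ⟨r, hr, rfl⟩ := exists_of_mem_rootGrading_mk 𝒜 d s n hi hx
    obtain ⟨r', hr', rfl⟩ := exists_of_mem_rootGrading_mk 𝒜 d s n hj hy
    convert of_mul_root_pow_mem_rootGrading 𝒜 d s n hs (SetLike.mul_mem_graded hr hr') (i + j)
      using 1
    · push_cast
      rfl
    · rw [map_mul, pow_add]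
      ring

theorem isHomogeneousElem_of_mul_root_pow (hs : s ∈ 𝒜 d) {a : A} {r : R} (hr : r ∈ 𝒜 a)
    (m : ℕ) : IsHomogeneousElem (rootGrading 𝒜 d s n) (ι r * 𝔷 ^ m) :=
  ⟨_, of_mul_root_pow_mem_rootGrading 𝒜 d s n hs hr m⟩

theorem isHomogeneousElem_of (hs : s ∈ 𝒜 d) {a : A} {r : R} (hr : r ∈ 𝒜 a) :
    IsHomogeneousElem (rootGrading 𝒜 d s n) (ι r) := by
  simpa using isHomogeneousElem_of_mul_root_pow 𝒜 n hs hr 0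

theorem isHomogeneousElem_root (hs : s ∈ 𝒜 d) : IsHomogeneousElem (rootGrading 𝒜 d s n) 𝔷 := by
  simpa using isHomogeneousElem_of_mul_root_pow 𝒜 n hs (SetLike.one_mem_graded 𝒜) 1

theorem root_hDvd_of_mul_root_pow (hs : s ∈ 𝒜 d) {a : A} {r : R} (hr : r ∈ 𝒜 a) {i : ℕ}
    (hi : i ≠ 0) : HDvd (rootGrading 𝒜 d s n) 𝔷 (ι r * 𝔷 ^ i) := by
  obtain ⟨k, rfl⟩ := Nat.exists_eq_add_one_of_ne_zero hi
  exact ⟨ι r * 𝔷 ^ k, isHomogeneousElem_of_mul_root_pow 𝒜 n hs hr k, by ring⟩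

variable [Nontrivial R]

theorem hDvd_root_of_iff (hs : s ∈ 𝒜 d) {r : R} :
    HDvd (rootGrading 𝒜 d s n) 𝔷 (ι r) ↔ HDvd 𝒜 s r := by
  constructor
  · rintro ⟨w, hw, hrw⟩
    obtain ⟨b, t, l, hl, ht, rfl⟩ := exists_of_isHomogeneousElem_rootGrading 𝒜 d s n hw
    have hrw' : ι r * 𝔷 ^ 0 = ι t * 𝔷 ^ (l + 1) := by rw [hrw]; ring
    rcases Nat.lt_or_ge (l + 1) n with hl' | hl'
    · rcases (of_mul_root_pow_eq_of_mul_root_pow_iff s n (NeZero.pos n) hl').1 hrw' with h | h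
      · exact h.1 ▸ hDvd_zero s
      · omega
    · rw [show l + 1 = n by omega, root_pow_self, pow_zero, mul_one, ← map_mul] at hrw'
      exact ⟨t, ⟨b, ht⟩, by rw [of_injective s n hrw', mul_comm]⟩
  · rintro ⟨t, ⟨b, ht⟩, rfl⟩
    refine ⟨ι t * 𝔷 ^ (n - 1), isHomogeneousElem_of_mul_root_pow 𝒜 n hs ht _, ?_⟩
    rw [map_mul, ← root_mul_root_pow_pred]
    ring

theorem hDvd_of_of_mul_root_pow_iff (hs : s ∈ 𝒜 d) {q c : R} {m : ℕ} (hm : m < n) :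
    HDvd (rootGrading 𝒜 d s n) (ι q) (ι c * 𝔷 ^ m) ↔ HDvd 𝒜 q c := by
  constructor
  · rintro ⟨w, hw, hcw⟩
    obtain ⟨b, t, l, hl, ht, rfl⟩ := exists_of_isHomogeneousElem_rootGrading 𝒜 d s n hw
    rw [← mul_assoc, ← map_mul] at hcw
    rcases (of_mul_root_pow_eq_of_mul_root_pow_iff s n hm hl).1 hcw with h | h
    · exact h.1 ▸ hDvd_zero q
    · exact ⟨t, ⟨b, ht⟩, h.2⟩
  · rintro ⟨t, ⟨b, ht⟩, rfl⟩
    exact ⟨ι t * 𝔷 ^ m, isHomogeneousElem_of_mul_root_pow 𝒜 n hs ht m, by rw [map_mul]; ring⟩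

end RootGrading

section GradedFactoriality

variable {A : Type*} [AddCommGroup A] [DecidableEq A] {R : Type*} [CommRing R] [IsDomain R]
  (𝒜 : A → AddSubgroup R) [GradedRing 𝒜]

theorem IsHomogeneousCancellative.of_isDomain : IsHomogeneousCancellative 𝒜 where
  isHomogeneousElem_of_mul_eq_one := by
    rintro u v ⟨a, ha⟩ huv
    have h : (DirectSum.decompose 𝒜 (u * v) (a + -a) : R) =
        u * DirectSum.decompose 𝒜 v (-a) :=
      DirectSum.coe_decompose_mul_add_of_left_mem 𝒜 ha
    rw [huv, add_neg_cancel, DirectSum.decompose_of_mem_same 𝒜 (SetLike.one_mem_graded 𝒜)] at h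
    set w : R := ↑(DirectSum.decompose 𝒜 v (-a))
    have hv : v = w := by linear_combination v * h + w * huv
    exact ⟨-a, hv ▸ SetLike.coe_mem _⟩
  isLeftRegular _ hp0 := (IsRegular.of_ne_zero hp0).left

variable {d : A} {s : R} (n : ℕ) [NeZero n]

local notation "ι" => AdjoinRoot.of (X ^ n - C s)
local notation "𝔷" => AdjoinRoot.root (X ^ n - C s)

theorem isHomogeneousCancellative_rootGrading (hs : s ∈ 𝒜 d) (hs0 : s ≠ 0) (hsu : ¬IsUnit s) :
    IsHomogeneousCancellative (rootGrading 𝒜 d s n) where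
  isHomogeneousElem_of_mul_eq_one := by
    intro u v hu huv
    obtain ⟨a, r, i, -, hr, rfl⟩ := exists_of_isHomogeneousElem_rootGrading 𝒜 d s n hu
    obtain ⟨rfl, hru⟩ := (isUnit_of_mul_root_pow_iff s n hsu).1 (IsUnit.of_mul_eq_one v huv)
    obtain ⟨r', hrr', -, hr'⟩ := (IsHomogeneousCancellative.of_isDomain 𝒜).exists_inv hru ⟨a, hr⟩
    obtain ⟨a', hr'⟩ := hr'
    have hrr'' : ι r * ι r' = 1 := by rw [← map_mul, hrr', map_one]
    rw [pow_zero, mul_one] at huv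
    rw [show v = ι r' by linear_combination ι r' * huv - v * hrr'']
    exact isHomogeneousElem_of 𝒜 n hs hr'
  isLeftRegular := by
    intro p hp hp0
    obtain ⟨a, r, i, -, -, rfl⟩ := exists_of_isHomogeneousElem_rootGrading 𝒜 d s n hp
    exact isLeftRegular_of_mul_root_pow s n hs0 (by rintro rfl; simp at hp0) i

theorem hIrreducible_root (hn : 1 < n) (hs : s ∈ 𝒜 d) (hs0 : s ≠ 0) (hsu : ¬IsUnit s) :
    HIrreducible (rootGrading 𝒜 d s n) 𝔷 := by
  refine ⟨root_ne_zero s n hs0, not_isUnit_root s n hsu, isHomogeneousElem_root 𝒜 n hs,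
    fun x y hx hy hxy => ?_⟩
  have hreg := isLeftRegular_root s n hs0
  obtain ⟨a, r, i, -, hr, rfl⟩ := exists_of_isHomogeneousElem_rootGrading 𝒜 d s n hx
  obtain ⟨b, r', j, -, hr', rfl⟩ := exists_of_isHomogeneousElem_rootGrading 𝒜 d s n hy
  by_cases hi : i = 0
  · by_cases hj : j = 0
    · subst hi hj
      have h := (of_mul_root_pow_eq_of_mul_root_pow_iff s n hn (NeZero.pos n)).1
        (show ι 1 * 𝔷 ^ 1 = ι (r * r') * 𝔷 ^ 0 by simpa using hxy)
      simp at h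
    · exact .inl (hreg.isUnit_of_eq_mul_of_dvd (hxy.trans (mul_comm _ _))
        (root_hDvd_of_mul_root_pow 𝒜 n hs hr' hj).dvd)
  · exact .inr (hreg.isUnit_of_eq_mul_of_dvd hxy (root_hDvd_of_mul_root_pow 𝒜 n hs hr hi).dvd)

theorem hPrime_root (hs : s ∈ 𝒜 d) (hsp : HPrime 𝒜 s) : HPrime (rootGrading 𝒜 d s n) 𝔷 := by
  refine ⟨root_ne_zero s n hsp.ne_zero, not_isUnit_root s n hsp.not_isUnit,
    isHomogeneousElem_root 𝒜 n hs, fun {x y} hx hy hxy => ?_⟩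
  obtain ⟨a, r, i, -, hr, rfl⟩ := exists_of_isHomogeneousElem_rootGrading 𝒜 d s n hx
  obtain ⟨b, r', j, -, hr', rfl⟩ := exists_of_isHomogeneousElem_rootGrading 𝒜 d s n hy
  by_cases hi : i = 0
  · by_cases hj : j = 0
    · subst hi hj
      simp only [pow_zero, mul_one, ← map_mul, hDvd_root_of_iff 𝒜 n hs] at hxy ⊢
      exact hsp.hDvd_or_hDvd ⟨a, hr⟩ ⟨b, hr'⟩ hxy
    · exact .inr (root_hDvd_of_mul_root_pow 𝒜 n hs hr' hj)
  · exact .inl (root_hDvd_of_mul_root_pow 𝒜 n hs hr hi)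

theorem hPrime_of (hs : s ∈ 𝒜 d) {q : R} (hq : HPrime 𝒜 q) (hqs : ¬HDvd 𝒜 q s) :
    HPrime (rootGrading 𝒜 d s n) (ι q) := by
  obtain ⟨a, hqa⟩ := hq.isHomogeneousElem
  refine ⟨fun h => hq.ne_zero (of_injective s n (by rw [h, map_zero])),
    fun h => hq.not_isUnit (isUnit_of_isUnit_of s n h), isHomogeneousElem_of 𝒜 n hs hqa,
    fun {x y} hx hy hxy => ?_⟩
  obtain ⟨b, r, i, hi, hr, rfl⟩ := exists_of_isHomogeneousElem_rootGrading 𝒜 d s n hx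
  obtain ⟨c, r', j, hj, hr', rfl⟩ := exists_of_isHomogeneousElem_rootGrading 𝒜 d s n hy
  rw [of_mul_root_pow_mul_of_mul_root_pow, hDvd_of_of_mul_root_pow_iff 𝒜 n hs
    (Nat.mod_lt _ (NeZero.pos n))] at hxy
  have hrr' : IsHomogeneousElem 𝒜 (r * r') := ⟨b + c, SetLike.mul_mem_graded hr hr'⟩
  have hsk : IsHomogeneousElem 𝒜 (s ^ ((i + j) / n)) := ⟨_, SetLike.pow_mem_graded _ hs⟩
  rcases hq.hDvd_or_hDvd hrr' hsk hxy with h | h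
  · exact (hq.hDvd_or_hDvd ⟨b, hr⟩ ⟨c, hr'⟩ h).imp
      (hDvd_of_of_mul_root_pow_iff 𝒜 n hs hi).2 (hDvd_of_of_mul_root_pow_iff 𝒜 n hs hj).2
  · exact absurd (hq.hDvd_of_hDvd_pow ⟨d, hs⟩ h) hqs

theorem of_mem_closure_hPrime (hs : s ∈ 𝒜 d) (hsirr : HIrreducible 𝒜 s)
    (hfac : GradedFactorial 𝒜) {q : R} (hq : HIrreducible 𝒜 q) :
    ι q ∈ Submonoid.closure {p | HPrime (rootGrading 𝒜 d s n) p} := by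
  have := gradedMonoid_rootGrading 𝒜 n hs
  have hR := IsHomogeneousCancellative.of_isDomain 𝒜
  have hz := hPrime_root 𝒜 n hs (hfac.hPrime_of_hIrreducible hR hsirr)
  by_cases hqs : HDvd 𝒜 q s
  · obtain ⟨v, hv, hsv⟩ := hqs
    have hvu : IsUnit v :=
      (hsirr.isUnit_or_isUnit hq.isHomogeneousElem hv hsv).resolve_left hq.not_isUnit
    obtain ⟨v', hvv', hv'u, b, hv'⟩ := hR.exists_inv hvu hv
    have hq' : ι q = ι v' * 𝔷 * 𝔷 ^ (n - 1) := by
      rw [mul_assoc, root_mul_root_pow_pred, ← map_mul, hsv,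
        show v' * (q * v) = q by linear_combination q * hvv']
    rw [hq']
    refine mul_mem (Submonoid.subset_closure ?_) (pow_mem (Submonoid.subset_closure hz) _)
    exact (isHomogeneousCancellative_rootGrading 𝒜 n hs hsirr.ne_zero
      hsirr.not_isUnit).hPrime_unit_mul (hv'u.map _) (isHomogeneousElem_of 𝒜 n hs hv') hz
  · exact Submonoid.subset_closure (hPrime_of 𝒜 n hs (hfac.hPrime_of_hIrreducible hR hq) hqs)

theorem gradedFactorial_rootGrading (hs : s ∈ 𝒜 d) (hsirr : HIrreducible 𝒜 s)
    (hfac : GradedFactorial 𝒜) : GradedFactorial (rootGrading 𝒜 d s n) := by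
  have := gradedMonoid_rootGrading 𝒜 n hs
  have hG := isHomogeneousCancellative_rootGrading 𝒜 n hs hsirr.ne_zero hsirr.not_isUnit
  have hz := hPrime_root 𝒜 n hs
    (hfac.hPrime_of_hIrreducible (IsHomogeneousCancellative.of_isDomain 𝒜) hsirr)
  refine hG.gradedFactorial_of_forall_mem_closure fun x hx0 hxu hx => ?_
  obtain ⟨a, r, i, -, hr, rfl⟩ := exists_of_isHomogeneousElem_rootGrading 𝒜 d s n hx
  by_cases hru : IsUnit r
  · obtain ⟨k, rfl⟩ : ∃ k, i = k + 1 := Nat.exists_eq_add_one_of_ne_zero fun hi =>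
      hxu ((isUnit_of_mul_root_pow_iff s n hsirr.not_isUnit).2 ⟨hi, hru⟩)
    rw [pow_succ', ← mul_assoc]
    refine mul_mem (Submonoid.subset_closure ?_) (pow_mem (Submonoid.subset_closure hz) k)
    exact hG.hPrime_unit_mul (hru.map _) (isHomogeneousElem_of 𝒜 n hs hr) hz
  · obtain ⟨f, hf, rfl⟩ := hfac.1 r (by rintro rfl; simp at hx0) hru ⟨a, hr⟩
    rw [map_multiset_prod]
    refine mul_mem (Submonoid.multiset_prod_mem _ _ fun y hy => ?_)
      (pow_mem (Submonoid.subset_closure hz) i)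
    obtain ⟨q, hq, rfl⟩ := Multiset.mem_map.1 hy
    exact of_mem_closure_hPrime 𝒜 n hs hsirr hfac (hf q hq)

theorem hIrreducible_of_gradedFactorial_rootGrading (hn : 1 < n) (hs : s ∈ 𝒜 d) (hs0 : s ≠ 0)
    (hsu : ¬IsUnit s) (hfac : GradedFactorial (rootGrading 𝒜 d s n)) : HIrreducible 𝒜 s := by
  have := gradedMonoid_rootGrading 𝒜 n hs
  have hz := hfac.hPrime_of_hIrreducible (isHomogeneousCancellative_rootGrading 𝒜 n hs hs0 hsu)
    (hIrreducible_root 𝒜 n hn hs hs0 hsu)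
  refine ⟨hs0, hsu, ⟨d, hs⟩, fun b c ⟨_, hb⟩ ⟨_, hc⟩ hbc => ?_⟩
  have hreg : IsLeftRegular s := (IsRegular.of_ne_zero hs0).left
  have hdvd : HDvd (rootGrading 𝒜 d s n) 𝔷 (ι b * ι c) :=
    ⟨𝔷 ^ (n - 1), (isHomogeneousElem_root 𝒜 n hs).pow _, by
      rw [← map_mul, ← hbc, root_mul_root_pow_pred]⟩
  rcases hz.hDvd_or_hDvd (isHomogeneousElem_of 𝒜 n hs hb) (isHomogeneousElem_of 𝒜 n hs hc) hdvd
    with h | h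
  · exact .inr (hreg.isUnit_of_eq_mul_of_dvd hbc ((hDvd_root_of_iff 𝒜 n hs).1 h).dvd)
  · exact .inl (hreg.isUnit_of_eq_mul_of_dvd (hbc.trans (mul_comm b c))
      ((hDvd_root_of_iff 𝒜 n hs).1 h).dvd)

end GradedFactoriality

/-- Let `R` be an `A`-graded integral domain which is `A`-factorial, `s` a
nonzero non-invertible homogeneous element of degree `d`, and `n ≥ 2`.  Then
`R' = R[z]/(z^n - s)`, graded by `A' = (A ⊕ ℤ)/⟨(d, -n)⟩` so that elements of `R` keep
their degrees and `z` has degree `[(0,1)]`, is `A'`-factorial iff `s` is `A`-irreducible. -/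
theorem stmt2 {A : Type*} [AddCommGroup A] [DecidableEq A]
    {R : Type*} [CommRing R] [IsDomain R]
    (𝒜 : A → AddSubgroup R) [GradedRing 𝒜]
    (hfac : GradedFactorial 𝒜)
    (d : A) (s : R) (hs : s ∈ 𝒜 d) (hs0 : s ≠ 0) (hsu : ¬IsUnit s)
    (n : ℕ) (hn : 2 ≤ n) :
    GradedFactorial (rootGrading 𝒜 d s n) ↔ HIrreducible 𝒜 s := by
  have : NeZero n := ⟨by omega⟩
  exact ⟨hIrreducible_of_gradedFactorial_rootGrading 𝒜 n hn hs hs0 hsu,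
    fun hsirr => gradedFactorial_rootGrading 𝒜 n hs hsirr hfac⟩
end

section
/- Let A be a Noetherian integrally closed integral domain containing the field of rational numbers ℚ (e.g. an algebra over a field of characteristic 0), let p ∈ A be a prime element, and let n ≥ 1 be an integer. Then A' = A[z]/(z^n − p) is a Noetherian integrally closed integral domain. -/
/-!
Let `K = Frac A` and let `θ` be a root of `X ^ n - p` in `L = K[X]/(X ^ n - p)`. Being
Eisenstein at `p`, `X ^ n - p` is the minimal polynomial of `θ` over `A`, so
`A[z]/(z ^ n - p) ≅ A[θ]`. Since `n` is invertible in `A`, the discriminant of the power basis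
`1, θ, …, θ ^ (n - 1)` is a unit times `p ^ (n - 1)`, so `p ^ (n - 1)` multiplies every element
of `L` integral over `A` into `A[θ]`. The Eisenstein condition then lets one divide by `p` inside
`A[θ]` again and again, so `A[θ]` is the integral closure of `A` in `L`, hence integrally closed.
Being a quotient of `A[X]`, it is Noetherian.
-/

open Polynomial

section Eisenstein

variable {A : Type*} [CommRing A] [IsDomain A] {p : A}

theorem Polynomial.isEisensteinAt_X_pow_sub_C (hp : Prime p) {n : ℕ} (hn : n ≠ 0) :
    (X ^ n - C p).IsEisensteinAt (Ideal.span {p}) := by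
  refine ⟨?_, fun {i} hi => ?_, ?_⟩
  · rw [(monic_X_pow_sub_C p hn).leadingCoeff, Ideal.mem_span_singleton]
    exact hp.not_dvd_one
  · rw [natDegree_X_pow_sub_C] at hi
    rw [coeff_sub, coeff_X_pow, if_neg hi.ne, coeff_C, zero_sub, Ideal.neg_mem_iff]
    split_ifs
    · exact Ideal.mem_span_singleton_self p
    · exact zero_mem _
  · rw [coeff_sub, coeff_X_pow, if_neg hn.symm, coeff_C_zero, zero_sub, Ideal.neg_mem_iff,
      Ideal.span_singleton_pow, Ideal.mem_span_singleton, sq]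
    exact fun h => hp.not_dvd_one ((mul_dvd_mul_iff_left hp.ne_zero).mp (by simpa using h))

theorem Polynomial.irreducible_X_pow_sub_C_of_prime (hp : Prime p) {n : ℕ} (hn : n ≠ 0) :
    Irreducible (X ^ n - C p) :=
  (isEisensteinAt_X_pow_sub_C hp hn).irreducible
    ((Ideal.span_singleton_prime hp.ne_zero).mpr hp) (monic_X_pow_sub_C p hn).isPrimitive
    (by rw [natDegree_X_pow_sub_C]; omega)

end Eisenstein

open Algebra

theorem Algebra.discr_powerBasis_of_minpoly_eq_X_pow_sub_C {K L : Type*} [Field K] [Field L]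
    [Algebra K L] [Algebra.IsSeparable K L] (B : PowerBasis K L) {a : K}
    (h : minpoly K B.gen = X ^ B.dim - C a) :
    discr K B.basis = (-1) ^ (B.dim * (B.dim - 1) / 2) * (B.dim : K) ^ B.dim *
      ((-1) ^ (B.dim + 1) * a) ^ (B.dim - 1) := by
  have := B.finite
  have hnorm : norm K B.gen = (-1) ^ (B.dim + 1) * a := by
    rw [PowerBasis.norm_gen_eq_coeff_zero_minpoly, h, coeff_sub, coeff_X_pow,
      if_neg B.dim_pos.ne, coeff_C_zero]
    ring
  rw [discr_powerBasis_eq_norm, B.finrank, h, derivative_sub, derivative_C, sub_zero,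
    derivative_X_pow, map_mul, aeval_C, map_pow, aeval_X, map_mul, map_pow,
    Algebra.norm_algebraMap, B.finrank, hnorm, mul_assoc]

section IntegralClosure

variable {R K L : Type*} [CommRing R] [IsDomain R] [IsIntegrallyClosed R] [Field K] [Field L]
  [Algebra R K] [IsFractionRing R K] [Algebra K L] [Algebra R L] [IsScalarTower R K L]

theorem PowerBasis.integralClosure_eq_adjoin_of_isEisensteinAt [Algebra.IsSeparable K L]
    {p : R} (hp : Prime p) {B : PowerBasis K L} (hint : IsIntegral R B.gen)
    (hei : (minpoly R B.gen).IsEisensteinAt (Ideal.span {p}))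
    {u : Rˣ} {k : ℕ} (hdiscr : discr K B.basis = algebraMap R K (u * p ^ k)) :
    integralClosure R L = adjoin R {B.gen} := by
  have := B.finite
  refine le_antisymm (fun x hx => ?_) (adjoin_le_integralClosure hint)
  refine mem_adjoin_of_smul_prime_pow_smul_of_minpoly_isEisensteinAt (n := k) hp hint hx ?_ hei
  have hmem := discr_mul_isIntegral_mem_adjoin K hint hx
  rw [hdiscr, algebraMap_smul, mul_smul] at hmem
  simpa only [smul_smul, u.inv_mul_cancel_left] using Subalgebra.smul_mem _ hmem (↑u⁻¹ : R)

theorem PowerBasis.integralClosure_eq_adjoin_of_minpoly_eq_X_pow_sub_C [Algebra.IsSeparable K L]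
    {p : R} (hp : Prime p) {B : PowerBasis K L} (hint : IsIntegral R B.gen)
    (hdim : IsUnit (B.dim : R)) (hmin : minpoly R B.gen = X ^ B.dim - C p) :
    integralClosure R L = adjoin R {B.gen} := by
  obtain ⟨v, hv⟩ := hdim
  have hsign : IsUnit ((-1 : R) ^ (B.dim * (B.dim - 1) / 2) * (-1) ^ ((B.dim + 1) * (B.dim - 1))) :=
    (isUnit_neg_one.pow _).mul (isUnit_neg_one.pow _)
  refine integralClosure_eq_adjoin_of_isEisensteinAt hp hint
    (hmin ▸ isEisensteinAt_X_pow_sub_C hp B.dim_pos.ne') (u := hsign.unit * v ^ B.dim)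
    (k := B.dim - 1) ?_
  rw [discr_powerBasis_of_minpoly_eq_X_pow_sub_C B (a := algebraMap R K p)]
  · simp only [Units.val_mul, IsUnit.unit_spec, Units.val_pow_eq_pow_val, hv]
    push_cast
    ring
  · rw [minpoly.isIntegrallyClosed_eq_field_fractions' K hint, hmin]
    simp

variable (K) in
theorem isIntegrallyClosed_adjoinRoot_minpoly [FiniteDimensional K L] {x : L}
    (hx : IsIntegral R x) (h : integralClosure R L = adjoin R {x}) :
    IsIntegrallyClosed (AdjoinRoot (minpoly R x)) :=
  have := integralClosure.isIntegrallyClosedOfFiniteExtension (R := R) K (L := L)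
  have := FaithfulSMul.trans R K L
  .of_equiv ((Subalgebra.equivOfEq _ _ h).trans (minpoly.equivAdjoin hx).symm).toRingEquiv

end IntegralClosure

namespace AdjoinRoot

theorem isIntegral_root_map {A K : Type*} [CommRing A] [CommRing K] [Algebra A K] {f : A[X]}
    (hf : f.Monic) : IsIntegral A (root (f.map (algebraMap A K))) :=
  ⟨f, hf, by rw [← aeval_def, ← aeval_map_algebraMap K, aeval_eq, mk_self]⟩

theorem minpoly_root_map {A K : Type*} [CommRing A] [IsDomain A] [IsIntegrallyClosed A] [Field K]
    [Algebra A K] [IsFractionRing A K] {f : A[X]} (hf : f.Monic)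
    [Fact (Irreducible (f.map (algebraMap A K)))] :
    minpoly A (root (f.map (algebraMap A K))) = f := by
  refine map_injective _ (IsFractionRing.injective A K) ?_
  rw [← minpoly.isIntegrallyClosed_eq_field_fractions' K (isIntegral_root_map (K := K) hf),
    minpoly_root (hf.map _).ne_zero, (hf.map _).leadingCoeff, inv_one, C_1, mul_one]

end AdjoinRoot

/-- Let `A` be a Noetherian integrally closed integral domain containing `ℚ`,
`p ∈ A` a prime element and `n ≥ 1`.  Then `A' = A[z]/(z^n − p)` is a Noetherian
integrally closed integral domain. -/
theorem stmt4 {A : Type*} [CommRing A] [IsDomain A] [IsNoetherianRing A]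
    [IsIntegrallyClosed A] [Algebra ℚ A] (p : A) (hp : Prime p) (n : ℕ) (hn : 1 ≤ n) :
    IsDomain (AdjoinRoot (Polynomial.X ^ n - Polynomial.C p)) ∧
    IsNoetherianRing (AdjoinRoot (Polynomial.X ^ n - Polynomial.C p)) ∧
    IsIntegrallyClosed (AdjoinRoot (Polynomial.X ^ n - Polynomial.C p)) := by
  have hn0 : n ≠ 0 := by omega
  have hmonic := monic_X_pow_sub_C p hn0
  let K := FractionRing A
  have hirr : Irreducible ((X ^ n - C p).map (algebraMap A K)) :=
    hmonic.irreducible_iff_irreducible_map_fraction_map.mp (irreducible_X_pow_sub_C_of_prime hp hn0)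
  have := Fact.mk hirr
  let B := AdjoinRoot.powerBasis hirr.ne_zero
  have := B.finite
  -- characteristic zero makes `L / K` separable
  have := charZero_of_injective_algebraMap (algebraMap ℚ A).injective
  have := FaithfulSMul.trans A K (AdjoinRoot ((X ^ n - C p).map (algebraMap A K)))
  have hint : IsIntegral A B.gen := by
    rw [AdjoinRoot.powerBasis_gen]; exact AdjoinRoot.isIntegral_root_map hmonic
  have hmin : minpoly A B.gen = X ^ n - C p := by
    rw [AdjoinRoot.powerBasis_gen]; exact AdjoinRoot.minpoly_root_map hmonic
  have hdim : B.dim = n := by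
    rw [AdjoinRoot.powerBasis_dim, hmonic.natDegree_map, natDegree_X_pow_sub_C]
  have hclosure := PowerBasis.integralClosure_eq_adjoin_of_minpoly_eq_X_pow_sub_C hp hint
    (by
      rw [hdim, ← map_natCast (algebraMap ℚ A)]
      exact (IsUnit.mk0 _ (by exact_mod_cast hn0)).map _)
    (by rw [hmin, hdim])
  rw [← hmin]
  exact ⟨AdjoinRoot.isDomain_of_prime (minpoly.prime_of_isIntegrallyClosed hint), inferInstance,
    isIntegrallyClosed_adjoinRoot_minpoly K hint hclosure⟩
end
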